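/- Let T be a finite set of linear TGDs and ΣD, ΣQ schemas. Then T is ΣD,ΣQ-trivial if and only if chase_T(D) →_{ΣQ} D for all singleton ΣD-databases D, i.e., for all ΣD-databases containing at most one fact. -/

import Mathlib

set_option autoImplicit false

/-! ### Terms: constants from 𝐂 (coded `Term.const n`) and nulls from 𝐍 (coded `Term.null n`) -/

inductive Term : Type
  | const : ℕ → Term
  | null  : ℕ → Term
deriving DecidableEq

def Term.isConst : Term → Prop
  | .const _ => True
  | .null _  => False

def termEquiv : Term ≃ ℕ ⊕ ℕ where
  toFun t := match t with
    | .const n => Sum.inl n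
    | .null n  => Sum.inr n
  invFun x := match x with
    | Sum.inl n => .const n
    | Sum.inr n => .null n
  left_inv t := by cases t <;> rfl
  right_inv x := by cases x <;> rfl

instance : Primcodable Term := Primcodable.ofEquiv _ termEquiv

/-! ### Relation symbols (with arity) and schemas -/

structure RelSym : Type where
  name : ℕ
  arity : ℕ
deriving DecidableEq

def relSymEquiv : RelSym ≃ ℕ × ℕ where
  toFun r := (r.name, r.arity)
  invFun p := ⟨p.1, p.2⟩
  left_inv r := rfl
  right_inv p := rfl

instance : Primcodable RelSym := Primcodable.ofEquiv _ relSymEquiv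

/-- A schema is a set of relation symbols. -/
abbrev Schema := Set RelSym

/-! ### Facts, instances, databases -/

structure Fct : Type where
  rel : RelSym
  args : List Term
deriving DecidableEq

def fctEquiv : Fct ≃ RelSym × List Term where
  toFun f := (f.rel, f.args)
  invFun p := ⟨p.1, p.2⟩
  left_inv f := rfl
  right_inv p := rfl

instance : Primcodable Fct := Primcodable.ofEquiv _ fctEquiv

/-- A fact is well-formed if its argument tuple matches the arity of its relation symbol
(arities are ≥ 1). -/
def Fct.wf (f : Fct) : Prop := f.args.length = f.rel.arity ∧ 1 ≤ f.rel.arity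

/-- An instance is a (possibly infinite) set of facts. -/
abbrev Inst := Set Fct

/-- The active domain of an instance. -/
def adom (I : Inst) : Set Term := { t | ∃ f ∈ I, t ∈ f.args }

/-- A database: a finite instance of well-formed facts using only constants from 𝐂. -/
def IsDB (I : Inst) : Prop :=
  I.Finite ∧ ∀ f ∈ I, f.wf ∧ ∀ t ∈ f.args, t.isConst

/-- `I` is a Σ-instance. -/
def InstOver (I : Inst) (S : Schema) : Prop := ∀ f ∈ I, f.rel ∈ S ∧ f.wf

/-- `I` is a Σ-database. -/
def IsDatabase (I : Inst) (S : Schema) : Prop := IsDB I ∧ ∀ f ∈ I, f.rel ∈ S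

/-! ### Homomorphisms -/

def Fct.map (h : Term → Term) (f : Fct) : Fct := ⟨f.rel, f.args.map h⟩

/-- `h` is a Σ-homomorphism from `I` to `J`. -/
def IsHomOn (S : Schema) (h : Term → Term) (I J : Inst) : Prop :=
  ∀ f ∈ I, f.rel ∈ S → f.map h ∈ J

/-- `h` is a homomorphism from `I` to `J` (all relation symbols). -/
def IsFullHom (h : Term → Term) (I J : Inst) : Prop := ∀ f ∈ I, f.map h ∈ J

/-- `h` is database-preserving: it is the identity on all constants from 𝐂. -/
def DBPres (h : Term → Term) : Prop := ∀ n : ℕ, h (Term.const n) = Term.const n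

/-- `I →_Σ J`: there is a database-preserving Σ-homomorphism from `I` to `J`. -/
def HomTo (S : Schema) (I J : Inst) : Prop := ∃ h, DBPres h ∧ IsHomOn S h I J

/-- The induced subinstance of `I` on a set `A` of terms. -/
def restrict (I : Inst) (A : Set Term) : Inst := { f | f ∈ I ∧ ∀ t ∈ f.args, t ∈ A }

/-- `I →ⁿ_Σ J`: every induced subinstance of `I` with at most `n` active-domain elements
admits a database-preserving Σ-homomorphism to `J`. -/
def HomN (S : Schema) (n : ℕ) (I J : Inst) : Prop :=
  ∀ A : Set Term, A ⊆ adom I → A.Finite → A.ncard ≤ n → HomTo S (restrict I A) J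

/-- `I →^lim_Σ J`. -/
def HomLim (S : Schema) (I J : Inst) : Prop := ∀ n : ℕ, 1 ≤ n → HomN S n I J

/-- Homomorphic equivalence of instances. -/
def HomEquiv (I J : Inst) : Prop := (∃ h, IsFullHom h I J) ∧ (∃ h, IsFullHom h J I)

/-! ### Gaifman graph and connectedness -/

def coOccur (I : Inst) (a b : Term) : Prop := ∃ f ∈ I, a ∈ f.args ∧ b ∈ f.args

/-- The Gaifman graph of `I` is connected. -/
def Connected (I : Inst) : Prop :=
  ∀ a ∈ adom I, ∀ b ∈ adom I, Relation.ReflTransGen (coOccur I) a b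

/-- Restriction `I|_Σ` of `I` to the facts using a relation symbol from Σ. -/
def restrS (I : Inst) (S : Schema) : Inst := { f | f ∈ I ∧ f.rel ∈ S }

/-- `I` is Σ-connected. -/
def SConnected (S : Schema) (I : Inst) : Prop := Connected (restrS I S)

/-- `C` is a maximally Σ-connected component of `I`. -/
def MaxConnComp (S : Schema) (I C : Inst) : Prop :=
  C ⊆ restrS I S ∧ Connected C ∧
    ∀ C', C ⊆ C' → C' ⊆ restrS I S → Connected C' → C' = C

/-! ### Conjunctive queries -/

structure Atom : Type where
  rel : RelSym
  args : List ℕ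
deriving DecidableEq

def atomEquiv : Atom ≃ RelSym × List ℕ where
  toFun a := (a.rel, a.args)
  invFun p := ⟨p.1, p.2⟩
  left_inv a := rfl
  right_inv p := rfl

instance : Primcodable Atom := Primcodable.ofEquiv _ atomEquiv

def Atom.wf (a : Atom) : Prop := a.args.length = a.rel.arity ∧ 1 ≤ a.rel.arity

/-- Instantiate an atom by an assignment of terms to variables. -/
def Atom.inst (h : ℕ → Term) (a : Atom) : Fct := ⟨a.rel, a.args.map h⟩

/-- A conjunctive query: a finite set of relational atoms (as a list) together with a
tuple of answer variables. -/
structure CQ : Type where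
  atoms : List Atom
  ans : List ℕ
deriving DecidableEq

def cqEquiv : CQ ≃ List Atom × List ℕ where
  toFun q := (q.atoms, q.ans)
  invFun p := ⟨p.1, p.2⟩
  left_inv q := rfl
  right_inv p := rfl

instance : Primcodable CQ := Primcodable.ofEquiv _ cqEquiv

/-- `q` is a CQ over schema Σ. -/
def CQ.Over (q : CQ) (S : Schema) : Prop := ∀ a ∈ q.atoms, a.rel ∈ S ∧ a.wf

/-- A homomorphism from `q` to `I`. -/
def CQHom (q : CQ) (I : Inst) (h : ℕ → Term) : Prop := ∀ a ∈ q.atoms, a.inst h ∈ I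

/-- `c̄` is an answer to `q` on `I`. -/
def IsAnswer (q : CQ) (I : Inst) (c : List Term) : Prop :=
  (∀ x ∈ c, x ∈ adom I) ∧ ∃ h, CQHom q I h ∧ q.ans.map h = c

/-- The canonical database of a CQ (variables viewed as constants/nulls). -/
def canonDB (q : CQ) : Inst := { f | ∃ a ∈ q.atoms, f = a.inst Term.null }

/-! ### Tuple-generating dependencies -/

/-- A TGD `∀x̄∀ȳ (φ(x̄,ȳ) → ∃z̄ ψ(x̄,z̄))`, with `frontier` the tuple `x̄` of
frontier variables. -/
structure TGD : Type where
  body : List Atom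
  head : List Atom
  frontier : List ℕ
deriving DecidableEq

def tgdEquiv : TGD ≃ List Atom × List Atom × List ℕ where
  toFun t := (t.body, t.head, t.frontier)
  invFun p := ⟨p.1, p.2.1, p.2.2⟩
  left_inv t := rfl
  right_inv p := rfl

instance : Primcodable TGD := Primcodable.ofEquiv _ tgdEquiv

def TGD.bodyVars (t : TGD) : Set ℕ := { x | ∃ a ∈ t.body, x ∈ a.args }
def TGD.headVars (t : TGD) : Set ℕ := { x | ∃ a ∈ t.head, x ∈ a.args }

/-- Well-formedness of a TGD: atoms are well-formed, the frontier variables are distinct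
body variables, and every variable shared by body and head is a frontier variable. -/
def TGD.wf (t : TGD) : Prop :=
  (∀ a ∈ t.body, a.wf) ∧ (∀ a ∈ t.head, a.wf) ∧ t.frontier.Nodup ∧
  (∀ x ∈ t.frontier, x ∈ t.bodyVars) ∧
  (∀ x, x ∈ t.bodyVars → x ∈ t.headVars → x ∈ t.frontier)

/-- A TGD is linear if its body contains at most one atom. -/
def TGD.Linear (t : TGD) : Prop := t.body.length ≤ 1

/-- A TGD is guarded if some body atom contains all body variables. -/
def TGD.Guarded (t : TGD) : Prop := ∃ a ∈ t.body, ∀ x, x ∈ t.bodyVars → x ∈ a.args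

/-- A TGD is frontier-one if it has exactly one frontier variable. -/
def TGD.FrontierOne (t : TGD) : Prop := t.frontier.length = 1

/-- `I ⊨ ϑ`. -/
def TGD.Satisfies (I : Inst) (t : TGD) : Prop :=
  ∀ g : ℕ → Term, (∀ a ∈ t.body, a.inst g ∈ I) →
    ∃ h : ℕ → Term, (∀ a ∈ t.head, a.inst h ∈ I) ∧ ∀ x ∈ t.frontier, h x = g x

/-- `I` is a model of the set `T` of TGDs. -/
def IsModel (I : Inst) (T : List TGD) : Prop := ∀ t ∈ T, TGD.Satisfies I t

/-- Number of (distinct) variables in the body of a TGD. -/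
def TGD.bodyVarList (t : TGD) : List ℕ := ((t.body.map Atom.args).flatten).dedup

/-- The body width of a set of TGDs. -/
def bodyWidth (T : List TGD) : ℕ := (T.map (fun t => t.bodyVarList.length)).foldr max 0

/-! ### The chase -/

/-- `ϑ` is applicable at tuple `c̄` in `I`. -/
def TGD.Applicable (t : TGD) (I : Inst) (c : List Term) : Prop :=
  (∃ g : ℕ → Term, (∀ a ∈ t.body, a.inst g ∈ I) ∧ t.frontier.map g = c) ∧
  ¬ (∃ h : ℕ → Term, (∀ a ∈ t.head, a.inst h ∈ I) ∧ t.frontier.map h = c)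

/-- `J` is the result of applying `ϑ` in `I` at `c̄`: the head is added, with the
existential variables replaced by distinct fresh nulls. -/
def TGD.StepResult (t : TGD) (I : Inst) (c : List Term) (J : Inst) : Prop :=
  ∃ h : ℕ → Term,
    t.frontier.map h = c ∧
    (∀ x, x ∈ t.headVars → x ∉ t.frontier → (¬ (h x).isConst ∧ h x ∉ adom I)) ∧
    (∀ x y, x ∈ t.headVars → y ∈ t.headVars → x ∉ t.frontier → y ∉ t.frontier →
      h x = h y → x = y) ∧
    J = I ∪ { f | ∃ a ∈ t.head, f = a.inst h }

/-- A chase step from `I` to `J` with some TGD of `T`. -/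
def ChaseStep (T : List TGD) (I J : Inst) : Prop :=
  ∃ t ∈ T, ∃ c, t.Applicable I c ∧ t.StepResult I c J

/-- A chase sequence for `I` with `T` (stalling when no TGD is applicable). -/
def IsChaseSeq (T : List TGD) (I : Inst) (f : ℕ → Inst) : Prop :=
  f 0 = I ∧ ∀ i, ChaseStep T (f i) (f (i+1)) ∨ ((¬ ∃ J, ChaseStep T (f i) J) ∧ f (i+1) = f i)

/-- Fairness: every applicable TGD application is eventually performed or becomes
non-applicable. -/
def IsFair (T : List TGD) (f : ℕ → Inst) : Prop :=
  ∀ i, ∀ t ∈ T, ∀ c, TGD.Applicable t (f i) c →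
    ∃ j, i ≤ j ∧
      ((TGD.Applicable t (f j) c ∧ TGD.StepResult t (f j) c (f (j+1))) ∨
        ¬ TGD.Applicable t (f j) c)

/-- `J` is the result of some fair chase sequence for `I` with `T`. -/
def IsChaseResult (T : List TGD) (I J : Inst) : Prop :=
  ∃ f : ℕ → Inst, IsChaseSeq T I f ∧ IsFair T f ∧ J = ⋃ i, f i

/-- `chase T I`: the result of an arbitrary but fixed fair chase sequence for `I` with `T`. -/
noncomputable def chase (T : List TGD) (I : Inst) : Inst :=
  @dite _ (∃ J, IsChaseResult T I J) (Classical.dec _) (fun h => h.choose) (fun _ => I)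

/-! ### Query answering w.r.t. TGDs and conservativity notions -/

/-- `c̄ ∈ q_T(D)`: `c̄` is a tuple over `adom D` and an answer to `q` on `chase T D`. -/
def AnswerWrt (q : CQ) (T : List TGD) (D : Inst) (c : List Term) : Prop :=
  (∀ x ∈ c, x ∈ adom D) ∧ ∃ h, CQHom q (chase T D) h ∧ q.ans.map h = c

/-- `T2` is `ΣD,ΣQ`-hom-conservative over `T1`. -/
def HomConservative (T1 T2 : List TGD) (SD SQ : Schema) : Prop :=
  ∀ D, IsDatabase D SD → HomTo SQ (chase T2 D) (chase T1 D)

/-- `T2` is `ΣD,ΣQ`-CQ-conservative over `T1`. -/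
def CQConservative (T1 T2 : List TGD) (SD SQ : Schema) : Prop :=
  ∀ D, IsDatabase D SD → ∀ q : CQ, CQ.Over q SQ →
    ∀ c, AnswerWrt q T2 D c → AnswerWrt q T1 D c

/-- `T` is `ΣD,ΣQ`-hom-trivial. -/
def HomTrivial (T : List TGD) (SD SQ : Schema) : Prop :=
  ∀ D, IsDatabase D SD → HomTo SQ (chase T D) D

/-- `T` is `ΣD,ΣQ`-CQ-trivial. -/
def CQTrivial (T : List TGD) (SD SQ : Schema) : Prop :=
  ∀ D, IsDatabase D SD → ∀ q : CQ, CQ.Over q SQ →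
    ∀ c, AnswerWrt q T D c → IsAnswer q D c

/-! For linear TGDs, the chase of `D` is, up to homomorphism, the disjoint union of the chases
of its single facts. Indeed, the union `U` of null-disjoint copies of these chases contains `D`
and is a model of `T`, since a linear body only ever matches inside one copy; hence `chase T D`
maps into `U`, and the homomorphisms of the single-fact chases into their facts glue to one from
`U` into `D`. -/

theorem Fct.map_map (F : Fct) (g h : Term → Term) : (F.map g).map h = F.map (h ∘ g) := by
  simp [Fct.map]

@[simp]
theorem Fct.map_id (F : Fct) : F.map id = F := by
  simp [Fct.map]

theorem Fct.map_congr {F : Fct} {g h : Term → Term} (hgh : ∀ u ∈ F.args, g u = h u) :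
    F.map g = F.map h := by
  simp only [Fct.map, List.map_congr_left hgh]

theorem Fct.map_eq_self {F : Fct} {ρ : Term → Term} (hρ : DBPres ρ)
    (hF : ∀ u ∈ F.args, u.isConst) : F.map ρ = F := by
  calc F.map ρ = F.map id := Fct.map_congr fun u hu => by
        cases u with
        | const n => exact hρ n
        | null n => exact (hF _ hu).elim
    _ = F := F.map_id

theorem Atom.inst_map (a : Atom) (g : ℕ → Term) (h : Term → Term) :
    (a.inst g).map h = a.inst (h ∘ g) := by
  simp [Atom.inst, Fct.map]

theorem Atom.inst_congr {a : Atom} {g h : ℕ → Term} (hgh : ∀ x ∈ a.args, g x = h x) :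
    a.inst g = a.inst h := by
  simp only [Atom.inst, List.map_congr_left hgh]

theorem adom_mono {I J : Inst} (hIJ : I ⊆ J) : adom I ⊆ adom J :=
  fun _ ⟨F, hF, hu⟩ => ⟨F, hIJ hF, hu⟩

theorem finite_adom {I : Inst} (hI : I.Finite) : (adom I).Finite := by
  have : adom I = ⋃ F ∈ I, {u | u ∈ F.args} := by ext; simp [adom]
  rw [this]
  exact hI.biUnion fun F _ => F.args.finite_toSet

theorem exists_null_not_mem_adom {I : Inst} (hI : I.Finite) :
    ∃ N, ∀ m, N ≤ m → Term.null m ∉ adom I := by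
  have hfin : (Term.null ⁻¹' adom I).Finite :=
    (finite_adom hI).preimage fun _ _ _ _ h => Term.null.inj h
  obtain ⟨N, hN⟩ := hfin.bddAbove
  exact ⟨N + 1, fun m hm hmem => absurd (hN hmem) (by omega)⟩

theorem IsDatabase.mono {D D' : Inst} {S : Schema} (hD : IsDatabase D S) (hD' : D' ⊆ D) :
    IsDatabase D' S :=
  ⟨⟨hD.1.1.subset hD', fun F hF => hD.1.2 F (hD' hF)⟩, fun F hF => hD.2 F (hD' hF)⟩

theorem HomTo.mono_right {S : Schema} {I J J' : Inst} (hJ : J ⊆ J') (h : HomTo S I J) :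
    HomTo S I J' :=
  let ⟨g, hg, hhom⟩ := h
  ⟨g, hg, fun F hF hS => hJ (hhom F hF hS)⟩

theorem HomTo.of_isFullHom {S : Schema} {I U J : Inst} {H : Term → Term} (hH : DBPres H)
    (hIU : IsFullHom H I U) (hUJ : HomTo S U J) : HomTo S I J := by
  obtain ⟨g, hg, hhom⟩ := hUJ
  refine ⟨g ∘ H, fun n => by simp [hH n, hg n], fun F hF hS => ?_⟩
  rw [← Fct.map_map]
  exact hhom _ (hIU F hF) hS

theorem TGD.Applicable.exists_stepResult {t : TGD} {I : Inst} {c : List Term} (hI : I.Finite)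
    (happ : t.Applicable I c) : ∃ J, t.StepResult I c J := by
  obtain ⟨⟨g, -, hgc⟩, -⟩ := happ
  obtain ⟨N, hN⟩ := exists_null_not_mem_adom hI
  refine ⟨_, fun x => if x ∈ t.frontier then g x else Term.null (N + x), ?_, ?_, ?_, rfl⟩
  · rw [← hgc]
    exact List.map_congr_left fun x hx => if_pos hx
  · intro x _ hx
    simp only [hx, if_false]
    exact ⟨id, hN _ (Nat.le_add_right N x)⟩
  · intro x y _ _ hx hy hxy
    simp only [hx, hy, if_false, Term.null.injEq] at hxy
    omega

theorem TGD.StepResult.subset {t : TGD} {I J : Inst} {c : List Term} (h : t.StepResult I c J) :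
    I ⊆ J := by
  obtain ⟨_, -, -, -, rfl⟩ := h
  exact Set.subset_union_left

theorem TGD.StepResult.finite {t : TGD} {I J : Inst} {c : List Term} (hI : I.Finite)
    (h : t.StepResult I c J) : J.Finite := by
  obtain ⟨s, -, -, -, rfl⟩ := h
  refine hI.union ((t.head.finite_toSet.image fun a => a.inst s).subset ?_)
  rintro _ ⟨a, ha, rfl⟩
  exact ⟨a, ha, rfl⟩

theorem ChaseStep.subset {T : List TGD} {I J : Inst} (h : ChaseStep T I J) : I ⊆ J :=
  let ⟨_, _, _, _, hs⟩ := h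
  hs.subset

theorem ChaseStep.finite {T : List TGD} {I J : Inst} (hI : I.Finite) (h : ChaseStep T I J) :
    J.Finite :=
  let ⟨_, _, _, _, hs⟩ := h
  hs.finite hI

theorem IsChaseSeq.monotone {T : List TGD} {I : Inst} {f : ℕ → Inst} (hf : IsChaseSeq T I f) :
    Monotone f := by
  refine monotone_nat_of_le_succ fun i => ?_
  rcases hf.2 i with h | ⟨-, h⟩
  · exact h.subset
  · exact h.ge

open Classical in
noncomputable def anyChaseStep (T : List TGD) (I : Inst) : Inst :=
  if h : ∃ J, ChaseStep T I J then h.choose else I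

theorem chaseStep_anyChaseStep_or (T : List TGD) (I : Inst) :
    ChaseStep T I (anyChaseStep T I) ∨
      (¬ ∃ J, ChaseStep T I J) ∧ anyChaseStep T I = I := by
  unfold anyChaseStep
  split_ifs with h
  exacts [Or.inl h.choose_spec, Or.inr ⟨h, rfl⟩]

open Classical in
/-- Fairness comes from every code `n` recurring as `i.unpair.1` at each `i = Nat.pair n j`. -/
noncomputable def chaseNext (T : List TGD) (i : ℕ) (I : Inst) : Inst :=
  match Encodable.decode (α := TGD × List Term) i.unpair.1 with
  | some (t, c) =>
    if h : t ∈ T ∧ ∃ J, t.Applicable I c ∧ t.StepResult I c J then h.2.choose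
    else anyChaseStep T I
  | none => anyChaseStep T I

theorem chaseStep_chaseNext_or (T : List TGD) (i : ℕ) (I : Inst) :
    ChaseStep T I (chaseNext T i I) ∨
      (¬ ∃ J, ChaseStep T I J) ∧ chaseNext T i I = I := by
  unfold chaseNext
  split
  · split_ifs with h
    · exact Or.inl ⟨_, h.1, _, h.2.choose_spec⟩
    · exact chaseStep_anyChaseStep_or T I
  · exact chaseStep_anyChaseStep_or T I

theorem stepResult_chaseNext {T : List TGD} {I : Inst} (hI : I.Finite) {i : ℕ} {t : TGD}
    {c : List Term} (hdec : Encodable.decode i.unpair.1 = some (t, c)) (ht : t ∈ T)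
    (happ : t.Applicable I c) : t.StepResult I c (chaseNext T i I) := by
  obtain ⟨J, hJ⟩ := happ.exists_stepResult hI
  have h : t ∈ T ∧ ∃ J, t.Applicable I c ∧ t.StepResult I c J := ⟨ht, J, happ, hJ⟩
  rw [chaseNext, hdec]
  dsimp only
  rw [dif_pos h]
  exact h.2.choose_spec.2

noncomputable def canonicalChase (T : List TGD) (I : Inst) : ℕ → Inst
  | 0 => I
  | i + 1 => chaseNext T i (canonicalChase T I i)

theorem isChaseSeq_canonicalChase (T : List TGD) (I : Inst) :
    IsChaseSeq T I (canonicalChase T I) :=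
  ⟨rfl, fun i => chaseStep_chaseNext_or T i _⟩

theorem finite_canonicalChase (T : List TGD) {I : Inst} (hI : I.Finite) (i : ℕ) :
    (canonicalChase T I i).Finite := by
  induction i with
  | zero => exact hI
  | succ i ih =>
    rcases chaseStep_chaseNext_or T i (canonicalChase T I i) with h | ⟨-, h⟩
    · exact h.finite ih
    · rwa [canonicalChase, h]

theorem isFair_canonicalChase (T : List TGD) {I : Inst} (hI : I.Finite) :
    IsFair T (canonicalChase T I) := by
  intro i t ht c _
  refine ⟨Nat.pair (Encodable.encode (t, c)) i, Nat.right_le_pair _ _, ?_⟩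
  by_cases happ : t.Applicable (canonicalChase T I (Nat.pair (Encodable.encode (t, c)) i)) c
  · refine Or.inl ⟨happ, stepResult_chaseNext (finite_canonicalChase T hI _) ?_ ht happ⟩
    rw [Nat.unpair_pair, Encodable.encodek]
  · exact Or.inr happ

theorem isChaseResult_chase (T : List TGD) {I : Inst} (hI : I.Finite) :
    IsChaseResult T I (chase T I) := by
  have h : ∃ J, IsChaseResult T I J :=
    ⟨_, _, isChaseSeq_canonicalChase T I, isFair_canonicalChase T hI, rfl⟩
  rw [chase, dif_pos h]
  exact h.choose_spec

theorem subset_chase (T : List TGD) {I : Inst} (hI : I.Finite) : I ⊆ chase T I := by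
  obtain ⟨f, hf, -, hJ⟩ := isChaseResult_chase T hI
  rw [hJ, ← hf.1]
  exact Set.subset_iUnion f 0

theorem exists_forall_inst_mem_of_monotone {f : ℕ → Inst} (hf : Monotone f) (l : List Atom)
    (g : ℕ → Term) (h : ∀ a ∈ l, a.inst g ∈ ⋃ i, f i) : ∃ i, ∀ a ∈ l, a.inst g ∈ f i := by
  induction l with
  | nil => exact ⟨0, by simp⟩
  | cons a l ih =>
    obtain ⟨i, hi⟩ := ih fun b hb => h b (List.mem_cons_of_mem a hb)
    obtain ⟨j, hj⟩ := Set.mem_iUnion.mp (h a List.mem_cons_self)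
    refine ⟨max i j, fun b hb => ?_⟩
    rcases List.mem_cons.mp hb with rfl | hb
    · exact hf (le_max_right i j) hj
    · exact hf (le_max_left i j) (hi b hb)

theorem TGD.exists_head_of_not_applicable {t : TGD} {I : Inst} {g : ℕ → Term}
    (hg : ∀ a ∈ t.body, a.inst g ∈ I) (hna : ¬ t.Applicable I (t.frontier.map g)) :
    ∃ h : ℕ → Term, (∀ a ∈ t.head, a.inst h ∈ I) ∧ ∀ x ∈ t.frontier, h x = g x := by
  rw [TGD.Applicable, not_and, not_not] at hna
  obtain ⟨h, hh, hc⟩ := hna ⟨g, hg, rfl⟩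
  exact ⟨h, hh, List.map_inj_left.mp hc⟩

theorem IsChaseResult.isModel {T : List TGD} {I J : Inst} (h : IsChaseResult T I J) :
    IsModel J T := by
  obtain ⟨f, hseq, hfair, rfl⟩ := h
  have hmono := hseq.monotone
  have lift : ∀ i, ∀ {s : ℕ → Term} {l : List Atom}, (∀ a ∈ l, a.inst s ∈ f i) →
      ∀ a ∈ l, a.inst s ∈ ⋃ i, f i :=
    fun i _ _ hs a ha => Set.mem_iUnion.mpr ⟨i, hs a ha⟩
  intro t ht g hg
  obtain ⟨i, hi⟩ := exists_forall_inst_mem_of_monotone hmono t.body g hg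
  by_cases happ : t.Applicable (f i) (t.frontier.map g)
  · obtain ⟨j, hij, ⟨-, h, hhc, -, -, hJ⟩ | hna⟩ := hfair i t ht _ happ
    · refine ⟨h, lift (j + 1) fun a ha => ?_, List.map_inj_left.mp hhc⟩
      rw [hJ]
      exact Or.inr ⟨a, ha, rfl⟩
    · obtain ⟨h, hh, hc⟩ :=
        TGD.exists_head_of_not_applicable (fun a ha => hmono hij (hi a ha)) hna
      exact ⟨h, lift j hh, hc⟩
  · obtain ⟨h, hh, hc⟩ := TGD.exists_head_of_not_applicable hi happ
    exact ⟨h, lift i hh, hc⟩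

theorem isModel_chase {T : List TGD} {I : Inst} (hI : I.Finite) : IsModel (chase T I) T :=
  (isChaseResult_chase T hI).isModel

theorem TGD.StepResult.exists_hom_extension {t : TGD} (hwf : t.wf) {I J M : Inst}
    {c : List Term} (hbody : ∃ g : ℕ → Term, (∀ a ∈ t.body, a.inst g ∈ I) ∧ t.frontier.map g = c)
    (hstep : t.StepResult I c J) (hM : t.Satisfies M) {h : Term → Term} (hdb : DBPres h)
    (hh : IsFullHom h I M) :
    ∃ h', DBPres h' ∧ IsFullHom h' J M ∧ Set.EqOn h' h (adom I) := by
  classical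
  obtain ⟨g, hg, hgc⟩ := hbody
  obtain ⟨s, hsc, hfresh, hinj, rfl⟩ := hstep
  obtain ⟨k, hk, hkg⟩ := hM (h ∘ g) fun a ha => Atom.inst_map a g h ▸ hh _ (hg a ha)
  set E : Set ℕ := {x | x ∈ t.headVars ∧ x ∉ t.frontier}
  let h' : Term → Term := fun u => if u ∈ s '' E then k (Function.invFunOn s E u) else h u
  have hagree : Set.EqOn h' h (adom I) := by
    rintro u hu
    refine if_neg ?_
    rintro ⟨x, hx, rfl⟩
    exact (hfresh x hx.1 hx.2).2 hu
  have hhead : ∀ x ∈ t.headVars, h' (s x) = k x := by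
    intro x hx
    by_cases hxf : x ∈ t.frontier
    · have hsg : s x = g x := List.map_inj_left.mp (hsc.trans hgc.symm) x hxf
      obtain ⟨a, ha, hxa⟩ := hwf.2.2.2.1 x hxf
      have hgx : g x ∈ adom I := ⟨_, hg a ha, List.mem_map_of_mem hxa⟩
      rw [hsg, hagree hgx, hkg x hxf]
      rfl
    · have hinjE : Set.InjOn s E := fun x hx y hy => hinj x y hx.1 hy.1 hx.2 hy.2
      have hxE : x ∈ E := ⟨hx, hxf⟩
      simp only [h', if_pos (Set.mem_image_of_mem s hxE), hinjE.leftInvOn_invFunOn hxE]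
  refine ⟨h', fun n => ?_, ?_, hagree⟩
  · have hn : Term.const n ∉ s '' E := by
      rintro ⟨x, hx, hsx⟩
      exact (hfresh x hx.1 hx.2).1 (hsx ▸ trivial)
    simp only [h', if_neg hn, hdb n]
  · rintro F (hF | ⟨a, ha, rfl⟩)
    · rw [Fct.map_congr fun u hu => hagree ⟨F, hF, hu⟩]
      exact hh F hF
    · rw [Atom.inst_map, Atom.inst_congr (g := h' ∘ s) fun x hx => hhead x ⟨a, ha, hx⟩]
      exact hk a ha

theorem exists_hom_iUnion_of_monotone {f : ℕ → Inst} (hf : Monotone f) {M : Inst}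
    {H : ℕ → Term → Term} (hdb : ∀ i, DBPres (H i)) (hhom : ∀ i, IsFullHom (H i) (f i) M)
    (hagree : ∀ i, Set.EqOn (H (i + 1)) (H i) (adom (f i))) :
    ∃ H', DBPres H' ∧ IsFullHom H' (⋃ i, f i) M := by
  classical
  have hagree_le : ∀ {i j}, i ≤ j → Set.EqOn (H j) (H i) (adom (f i)) := by
    intro i j hij
    induction j, hij using Nat.le_induction with
    | base => exact Set.eqOn_refl _ _
    | succ j hij ih => exact fun u hu => (hagree j (adom_mono (hf hij) hu)).trans (ih hu)
  let stage : Term → ℕ := fun u => if hu : ∃ i, u ∈ adom (f i) then Nat.find hu else 0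
  refine ⟨fun u => H (stage u) u, fun n => hdb _ n, fun F hF => ?_⟩
  obtain ⟨i, hFi⟩ := Set.mem_iUnion.mp hF
  suffices F.map (fun u => H (stage u) u) = F.map (H i) from this ▸ hhom i F hFi
  refine Fct.map_congr fun u hu => ?_
  have hu' : ∃ i, u ∈ adom (f i) := ⟨i, F, hFi, hu⟩
  simp only [stage, dif_pos hu']
  exact (hagree_le (Nat.find_min' hu' ⟨F, hFi, hu⟩) (Nat.find_spec hu')).symm

theorem IsChaseSeq.exists_hom_iUnion {T : List TGD} (hwf : ∀ t ∈ T, t.wf) {I M : Inst}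
    {f : ℕ → Inst} (hseq : IsChaseSeq T I f) (hIM : I ⊆ M) (hM : IsModel M T) :
    ∃ H, DBPres H ∧ IsFullHom H (⋃ i, f i) M := by
  have hext : ∀ i (h : Term → Term), DBPres h ∧ IsFullHom h (f i) M →
      ∃ h', (DBPres h' ∧ IsFullHom h' (f (i + 1)) M) ∧ Set.EqOn h' h (adom (f i)) := by
    rintro i h ⟨hdb, hh⟩
    rcases hseq.2 i with ⟨t, ht, c, happ, hstep⟩ | ⟨-, heq⟩
    · obtain ⟨h', hdb', hh', hagree⟩ :=
        hstep.exists_hom_extension (hwf t ht) happ.1 (hM t ht) hdb hh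
      exact ⟨h', ⟨hdb', hh'⟩, hagree⟩
    · exact ⟨h, ⟨hdb, heq ▸ hh⟩, Set.eqOn_refl _ _⟩
  choose! next hnext hagree using hext
  let H : ℕ → Term → Term := fun i => Nat.rec id (fun j h => next j h) i
  have hH : ∀ i, DBPres (H i) ∧ IsFullHom (H i) (f i) M := by
    intro i
    induction i with
    | zero =>
      refine ⟨fun _ => rfl, fun F hF => ?_⟩
      rw [hseq.1] at hF
      simpa [H] using hIM hF
    | succ i ih => exact hnext i _ ih
  exact exists_hom_iUnion_of_monotone hseq.monotone (fun i => (hH i).1) (fun i => (hH i).2)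
    fun i => hagree i _ (hH i)

theorem exists_hom_chase_of_isModel {T : List TGD} (hwf : ∀ t ∈ T, t.wf) {I M : Inst}
    (hI : I.Finite) (hIM : I ⊆ M) (hM : IsModel M T) :
    ∃ H, DBPres H ∧ IsFullHom H (chase T I) M := by
  obtain ⟨f, hseq, -, hJ⟩ := isChaseResult_chase T hI
  rw [hJ]
  exact hseq.exists_hom_iUnion hwf hIM hM

theorem TGD.Satisfies.image_of_injective {t : TGD} (hwf : t.wf) {M : Inst} (hM : t.Satisfies M)
    {ρ : Term → Term} (hρ : Function.Injective ρ) : t.Satisfies (Fct.map ρ '' M) := by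
  have : Nonempty Term := ⟨.const 0⟩
  have hσ : Function.LeftInverse (Function.invFun ρ) ρ := Function.leftInverse_invFun hρ
  intro g hg
  have hpull : ∀ a ∈ t.body, a.inst (Function.invFun ρ ∘ g) ∈ M := by
    intro a ha
    obtain ⟨F, hF, hFg⟩ := hg a ha
    rwa [← Atom.inst_map, ← hFg, Fct.map_map, hσ.comp_eq_id, Fct.map_id]
  obtain ⟨h, hh, hhg⟩ := hM _ hpull
  refine ⟨ρ ∘ h, fun a ha => ⟨_, hh a ha, Atom.inst_map _ _ _⟩, fun x hx => ?_⟩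
  obtain ⟨a, ha, hxa⟩ := hwf.2.2.2.1 x hx
  obtain ⟨F, -, hFg⟩ := hg a ha
  obtain ⟨u, -, hu⟩ := List.mem_map.mp (hFg ▸ List.mem_map_of_mem hxa : g x ∈ (F.map ρ).args)
  rw [Function.comp_apply, hhg x hx, Function.comp_apply, ← hu, hσ u]

theorem IsModel.image_of_injective {T : List TGD} (hwf : ∀ t ∈ T, t.wf) {M : Inst}
    (hM : IsModel M T) {ρ : Term → Term} (hρ : Function.Injective ρ) :
    IsModel (Fct.map ρ '' M) T :=
  fun t ht => (hM t ht).image_of_injective (hwf t ht) hρ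

theorem IsModel.iUnion {ι : Type*} [Nonempty ι] {T : List TGD} (hlin : ∀ t ∈ T, t.Linear)
    {M : ι → Inst} (hM : ∀ k, IsModel (M k) T) : IsModel (⋃ k, M k) T := by
  intro t ht g hg
  obtain ⟨k, hk⟩ : ∃ k, ∀ a ∈ t.body, a.inst g ∈ M k := by
    have hlen := hlin t ht
    rw [TGD.Linear] at hlen
    rcases hb : t.body with _ | ⟨a, _ | ⟨b, l⟩⟩
    · exact ⟨Classical.arbitrary ι, by simp⟩
    · obtain ⟨k, hk⟩ := Set.mem_iUnion.mp (hg a (by simp [hb]))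
      exact ⟨k, by simpa using hk⟩
    · simp [hb] at hlen
  obtain ⟨h, hh, hhg⟩ := hM k t ht g hk
  exact ⟨h, fun a ha => Set.mem_iUnion.mpr ⟨k, hh a ha⟩, hhg⟩

def renameNulls (k : ℕ) : Term → Term
  | .const n => .const n
  | .null n => .null (Nat.pair k n)

theorem dbPres_renameNulls (k : ℕ) : DBPres (renameNulls k) := fun _ => rfl

theorem renameNulls_injective (k : ℕ) : Function.Injective (renameNulls k) := by
  rintro (m | m) (n | n) h <;> simp_all [renameNulls]

theorem homTo_iUnion_renameNulls {ι : Type*} [Encodable ι] {S : Schema} {M : ι → Inst}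
    {J : Inst} (h : ∀ k, HomTo S (M k) J) :
    HomTo S (⋃ k, Fct.map (renameNulls (Encodable.encode k)) '' M k) J := by
  choose h hdb hhom using h
  let G : Term → Term
    | .const n => .const n
    | .null m =>
      match Encodable.decode (α := ι) m.unpair.1 with
      | some k => h k (.null m.unpair.2)
      | none => .null m
  have hG : ∀ k, G ∘ renameNulls (Encodable.encode k) = h k := by
    intro k
    funext u
    cases u with
    | const n => exact (hdb k n).symm
    | null n => simp [G, renameNulls, Encodable.encodek]
  refine ⟨G, fun _ => rfl, fun F hF hS => ?_⟩
  obtain ⟨k, F', hF', rfl⟩ := Set.mem_iUnion.mp hF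
  rw [Fct.map_map, hG]
  exact hhom k F' hF' hS

/-- Lemma 13: a set of linear TGDs is `ΣD,ΣQ`-trivial iff
`chase_T(D) →_{ΣQ} D` for all singleton `ΣD`-databases `D`. -/
theorem linear_trivial_iff_singletons (T : List TGD) (SD SQ : Schema)
    (hT : ∀ t ∈ T, t.wf ∧ t.Linear) :
    HomTrivial T SD SQ ↔
      ∀ D : Inst, IsDatabase D SD → D.Subsingleton → HomTo SQ (chase T D) D := by
  refine ⟨fun h D hD _ => h D hD, fun hsing D hD => ?_⟩
  rcases D.eq_empty_or_nonempty with rfl | hne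
  · exact hsing ∅ hD Set.subsingleton_empty
  have : Nonempty D := hne.to_subtype
  have : Encodable D := Encodable.ofCountable D
  have hwf : ∀ t ∈ T, t.wf := fun t ht => (hT t ht).1
  let U : Inst := ⋃ F : D, Fct.map (renameNulls (Encodable.encode F)) '' chase T {F.1}
  have hDU : D ⊆ U := fun F hF => Set.mem_iUnion.mpr ⟨⟨F, hF⟩, F,
    subset_chase T (Set.finite_singleton F) rfl,
    Fct.map_eq_self (dbPres_renameNulls _) (hD.1.2 F hF).2⟩
  have hU : IsModel U T := IsModel.iUnion (fun t ht => (hT t ht).2) fun _ =>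
    (isModel_chase (Set.finite_singleton _)).image_of_injective hwf (renameNulls_injective _)
  obtain ⟨H, hH, hHU⟩ := exists_hom_chase_of_isModel hwf hD.1.1 hDU hU
  refine HomTo.of_isFullHom hH hHU (homTo_iUnion_renameNulls fun F => ?_)
  have hF : {F.1} ⊆ D := Set.singleton_subset_iff.mpr F.2
  exact (hsing _ (hD.mono hF) Set.subsingleton_singleton).mono_right hF
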